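/- arXiv:1606.04614 — 2 statements merged into one kernel-verified Lean document; each statement's English description precedes it below -/
import Mathlib

section
/- Let r ≥ 2, let p ∈ S be homogeneous of degree d, and let g ∈ GL_r(k). Then for every 0 ≤ j ≤ d, the coefficient of the monomial x_1^{d-j} x_2^{j} in g·p equals the sum, over all tuples (i_1,…,i_r) of non-negative integers with i_1 + … + i_r = j, of (∏_{a=1}^{r} g_{2a}^{i_a} / i_a!) times the iterated partial derivative ∂^{j} p / (∂x_1^{i_1} ⋯ ∂x_r^{i_r}) evaluated at the point (x_1,…,x_r) = (g_{11},…,g_{1r}). -/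
/-!
Setting the variables other than `x₁, x₂` to zero does not change the coefficient in question,
and turns `g·p` into `p(u₁x₁ + v₁x₂, …, uᵣx₁ + vᵣx₂)`, where `u, v` are the first two rows
of `g`. Both sides are linear in `p`, so it suffices to treat a monomial `xᵐ` of degree `d`.
Expanding every factor `(uₐx₁ + vₐx₂)^{mₐ}` binomially, the coefficient of `x₁^{d-j}x₂^j` is
`∑_{|i|=j} ∏ₐ C(mₐ, iₐ) uₐ^{mₐ-iₐ} vₐ^{iₐ}`, and so is the right-hand side, because
`∂ⁱxᵐ = ∏ₐ mₐ(mₐ-1)⋯(mₐ-iₐ+1) · x^{m-i}` and `mₐ(mₐ-1)⋯(mₐ-iₐ+1) / iₐ! = C(mₐ, iₐ)`.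
-/

open MvPolynomial

/-- The action of a matrix `g` on polynomials, determined by `g · xᵢ = ∑ⱼ gⱼᵢ xⱼ`. -/
noncomputable def glAct {k : Type*} [CommSemiring k] {r : ℕ}
    (g : Matrix (Fin r) (Fin r) k) (p : MvPolynomial (Fin r) k) : MvPolynomial (Fin r) k :=
  aeval (fun i => ∑ j, MvPolynomial.C (g j i) * X j) p

/-- The iterated partial derivative `∂^{i₁}_{x₁} ⋯ ∂^{iᵣ}_{xᵣ}` applied to a polynomial. -/
noncomputable def iterPDeriv {k : Type*} [CommSemiring k] {r : ℕ}
    (i : Fin r → ℕ) (p : MvPolynomial (Fin r) k) : MvPolynomial (Fin r) k :=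
  (List.finRange r).foldr (fun a q => (MvPolynomial.pderiv a)^[i a] q) p

namespace MvPolynomial

section Derivatives

variable {R σ : Type*} [CommSemiring R]

theorem iterate_pderiv_monomial (a : σ) (n : ℕ) (m : σ →₀ ℕ) (c : R) :
    (pderiv a)^[n] (monomial m c) =
      monomial (m - Finsupp.single a n) (c * (m a).descFactorial n) := by
  induction n with
  | zero => simp
  | succ n ih =>
    rw [Function.iterate_succ_apply', ih, pderiv_monomial, tsub_tsub, ← Finsupp.single_add,
      Finsupp.tsub_apply, Finsupp.single_eq_same, Nat.descFactorial_succ, Nat.cast_mul]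
    ring_nf

theorem foldr_iterate_pderiv_monomial [DecidableEq σ] (i : σ → ℕ) (m : σ →₀ ℕ) (c : R) :
    ∀ l : List σ, l.Nodup →
      l.foldr (fun a q => (pderiv a)^[i a] q) (monomial m c) =
        monomial (m - ∑ a ∈ l.toFinset, Finsupp.single a (i a))
          (c * ∏ a ∈ l.toFinset, ((m a).descFactorial (i a) : R))
  | [], _ => by simp
  | a :: l, hl => by
    obtain ⟨ha, hl⟩ := List.nodup_cons.mp hl
    have ha' : a ∉ l.toFinset := List.mem_toFinset.not.mpr ha
    have hma : (m - ∑ b ∈ l.toFinset, Finsupp.single b (i b)) a = m a := by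
      rw [Finsupp.tsub_apply, Finsupp.finsetSum_apply,
        Finset.sum_eq_zero fun b hb => Finsupp.single_eq_of_ne (by rintro rfl; exact ha' hb),
        Nat.sub_zero]
    rw [List.foldr_cons, foldr_iterate_pderiv_monomial i m c l hl, iterate_pderiv_monomial, hma,
      tsub_tsub, List.toFinset_cons, Finset.sum_insert ha', Finset.prod_insert ha', add_comm,
      mul_left_comm, mul_comm]

theorem foldr_iterate_pderiv_eq_foldr_pow (i : σ → ℕ) (l : List σ) (p : MvPolynomial σ R) :
    l.foldr (fun a q => (pderiv a)^[i a] q) p =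
      l.foldr (fun a (F : Module.End R (MvPolynomial σ R)) => (pderiv a).toLinearMap ^ i a * F)
        1 p := by
  induction l with
  | nil => rfl
  | cons a l ih =>
    rw [List.foldr_cons, List.foldr_cons, ih, Module.End.mul_apply, Module.End.pow_apply]
    rfl

end Derivatives

section LinearForms

variable {R σ : Type*} [CommSemiring R]

theorem add_pow_C_mul_X (i0 i1 : σ) (x y : R) (n : ℕ) :
    (C x * X i0 + C y * X i1) ^ n =
      ∑ t ∈ Finset.range (n + 1), monomial (Finsupp.single i0 (n - t) + Finsupp.single i1 t)
        (n.choose t * x ^ (n - t) * y ^ t) := by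
  rw [add_comm, add_pow]
  refine Finset.sum_congr rfl fun t _ => ?_
  rw [mul_pow, mul_pow, ← map_pow, ← map_pow, X_pow_eq_monomial, X_pow_eq_monomial,
    C_mul_monomial, C_mul_monomial, monomial_mul, ← map_natCast C, mul_comm, C_mul_monomial,
    add_comm]
  ring_nf

variable [Fintype σ] [DecidableEq σ]

theorem aeval_C_mul_X_add_C_mul_X_monomial (i0 i1 : σ) (u v : σ → R) (m : σ →₀ ℕ) (c : R) :
    aeval (fun a => C (u a) * X i0 + C (v a) * X i1) (monomial m c) =
      ∑ i ∈ Fintype.piFinset fun a => Finset.range (m a + 1),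
        monomial (Finsupp.single i0 (∑ a, (m a - i a)) + Finsupp.single i1 (∑ a, i a))
          (c * ∏ a, (m a).choose (i a) * u a ^ (m a - i a) * v a ^ i a) := by
  rw [aeval_monomial, Finsupp.prod_fintype _ _ (fun _ => pow_zero _)]
  simp only [add_pow_C_mul_X]
  rw [Finset.prod_univ_sum, algebraMap_eq, Finset.mul_sum]
  refine Finset.sum_congr rfl fun i _ => ?_
  rw [← monomial_sum_prod, C_mul_monomial, Finset.sum_add_distrib, ← Finsupp.single_finsetSum,
    ← Finsupp.single_finsetSum]

theorem coeff_aeval_C_mul_X_add_C_mul_X_monomial {r : ℕ} {i0 i1 : Fin r} (h01 : i0 ≠ i1)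
    (u v : Fin r → R) {d : ℕ} (j : ℕ) {m : Fin r →₀ ℕ} (hm : ∑ a, m a = d) (c : R) :
    coeff (Finsupp.single i0 (d - j) + Finsupp.single i1 j)
        (aeval (fun a => C (u a) * X i0 + C (v a) * X i1) (monomial m c)) =
      ∑ i ∈ Finset.Nat.antidiagonalTuple r j,
        c * ∏ a, (m a).choose (i a) * u a ^ (m a - i a) * v a ^ i a := by
  set P := Fintype.piFinset fun a => Finset.range (m a + 1)
  set F : (Fin r → ℕ) → R :=
    fun i => c * ∏ a, (m a).choose (i a) * u a ^ (m a - i a) * v a ^ i a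
  have hterm : ∀ i ∈ P, coeff (Finsupp.single i0 (d - j) + Finsupp.single i1 j)
      (monomial (Finsupp.single i0 (∑ a, (m a - i a)) + Finsupp.single i1 (∑ a, i a)) (F i)) =
        if i ∈ Finset.Nat.antidiagonalTuple r j then F i else 0 := by
    intro i hi
    have hle (a : Fin r) : i a ≤ m a :=
      Nat.lt_succ_iff.mp (Finset.mem_range.mp (Fintype.mem_piFinset.mp hi a))
    rw [coeff_monomial, Finset.sum_tsub_distrib _ fun a _ => hle a, hm]
    by_cases hj : i ∈ Finset.Nat.antidiagonalTuple r j
    · rw [Finset.Nat.mem_antidiagonalTuple.mp hj, if_pos rfl, if_pos hj]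
    · refine (if_neg fun he => hj ?_).trans (if_neg hj).symm
      exact Finset.Nat.mem_antidiagonalTuple.mpr (by simpa [h01.symm] using congr($he i1))
  have hvanish : ∀ i ∈ Finset.Nat.antidiagonalTuple r j,
      i ∉ P ∩ Finset.Nat.antidiagonalTuple r j → F i = 0 := by
    intro i hij hi
    obtain ⟨a, ha⟩ : ∃ a, m a < i a := by
      by_contra! h
      exact hi (Finset.mem_inter.mpr ⟨Fintype.mem_piFinset.mpr fun a =>
        Finset.mem_range.mpr (Nat.lt_succ_of_le (h a)), hij⟩)
    exact mul_eq_zero_of_right c (Finset.prod_eq_zero (Finset.mem_univ a) (by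
      rw [Nat.choose_eq_zero_of_lt ha, Nat.cast_zero, zero_mul, zero_mul]))
  rw [aeval_C_mul_X_add_C_mul_X_monomial, coeff_sum, Finset.sum_congr rfl hterm,
    Finset.sum_ite_mem]
  exact Finset.sum_subset Finset.inter_subset_right hvanish

end LinearForms

section Restriction

variable {R σ : Type*} [CommSemiring R] [DecidableEq σ] (s : Finset σ)

theorem aeval_ite_mem_X_monomial (m : σ →₀ ℕ) (c : R) :
    aeval (fun b => if b ∈ s then X b else 0) (monomial m c) =
      if m.support ⊆ s then monomial m c else 0 := by
  rw [aeval_monomial, Finsupp.prod, algebraMap_eq]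
  split_ifs with hm
  · rw [monomial_eq, Finsupp.prod]
    congr 1
    exact Finset.prod_congr rfl fun b hb => by rw [if_pos (hm hb)]
  · obtain ⟨b, hb, hbs⟩ := Finset.not_subset.mp hm
    rw [Finset.prod_eq_zero hb (by rw [if_neg hbs, zero_pow (Finsupp.mem_support_iff.mp hb)]),
      mul_zero]

theorem coeff_aeval_ite_mem_X {e : σ →₀ ℕ} (he : e.support ⊆ s) (q : MvPolynomial σ R) :
    coeff e (aeval (fun b => if b ∈ s then X b else 0) q) = coeff e q := by
  conv_lhs => rw [q.as_sum, map_sum, coeff_sum]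
  conv_rhs => rw [q.as_sum, coeff_sum]
  refine Finset.sum_congr rfl fun m _ => ?_
  rw [aeval_ite_mem_X_monomial]
  split_ifs with hm
  · rfl
  · rw [coeff_zero, coeff_monomial, if_neg (by rintro rfl; exact hm he)]

end Restriction

end MvPolynomial

section IterPDeriv

variable {R : Type*} {r : ℕ}

theorem iterPDeriv_monomial [CommSemiring R] (i : Fin r → ℕ) (m : Fin r →₀ ℕ) (c : R) :
    iterPDeriv i (monomial m c) =
      monomial (m - ∑ a, Finsupp.single a (i a))
        (c * ∏ a, ((m a).descFactorial (i a) : R)) := by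
  rw [iterPDeriv, foldr_iterate_pderiv_monomial i m c _ (List.nodup_finRange r),
    List.toFinset_finRange]

theorem iterPDeriv_sum [CommSemiring R] {ι : Type*} (i : Fin r → ℕ) (s : Finset ι)
    (f : ι → MvPolynomial (Fin r) R) :
    iterPDeriv i (∑ x ∈ s, f x) = ∑ x ∈ s, iterPDeriv i (f x) := by
  simp only [iterPDeriv, foldr_iterate_pderiv_eq_foldr_pow, map_sum]

theorem prod_div_factorial_mul_eval_iterPDeriv_monomial [Field R] [CharZero R]
    (u v : Fin r → R) (i : Fin r → ℕ) (m : Fin r →₀ ℕ) (c : R) :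
    (∏ a, v a ^ i a / (i a).factorial) * eval u (iterPDeriv i (monomial m c)) =
      c * ∏ a, (m a).choose (i a) * u a ^ (m a - i a) * v a ^ i a := by
  have hexp (a : Fin r) : (m - ∑ b, Finsupp.single b (i b)) a = m a - i a := by
    simp [Finsupp.single_apply]
  have hfactor (a : Fin r) :
      v a ^ i a / (i a).factorial * ((m a).descFactorial (i a) * u a ^ (m a - i a)) =
        (m a).choose (i a) * u a ^ (m a - i a) * v a ^ i a := by
    have : ((i a).factorial : R) ≠ 0 := Nat.cast_ne_zero.mpr (Nat.factorial_ne_zero _)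
    rw [Nat.descFactorial_eq_factorial_mul_choose, Nat.cast_mul]
    field_simp
  rw [iterPDeriv_monomial, eval_monomial, Finsupp.prod_fintype _ _ (fun _ => pow_zero _)]
  simp only [hexp]
  rw [mul_assoc, mul_left_comm, ← Finset.prod_mul_distrib, ← Finset.prod_mul_distrib]
  simp only [hfactor]

end IterPDeriv

theorem coeff_aeval_C_mul_X_add_C_mul_X_of_isHomogeneous {R : Type*} [Field R] [CharZero R]
    {r : ℕ} {i0 i1 : Fin r} (h01 : i0 ≠ i1) (u v : Fin r → R) {d : ℕ} (j : ℕ)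
    {p : MvPolynomial (Fin r) R} (hp : p.IsHomogeneous d) :
    coeff (Finsupp.single i0 (d - j) + Finsupp.single i1 j)
        (aeval (fun a => C (u a) * X i0 + C (v a) * X i1) p) =
      ∑ i ∈ Finset.Nat.antidiagonalTuple r j,
        (∏ a, v a ^ i a / (i a).factorial) * eval u (iterPDeriv i p) := by
  conv_lhs => rw [p.as_sum, map_sum, coeff_sum]
  conv_rhs => rw [p.as_sum]
  simp only [iterPDeriv_sum, map_sum, Finset.mul_sum]
  rw [Finset.sum_comm]
  refine Finset.sum_congr rfl fun m hm => ?_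
  have hdeg : ∑ a, m a = d := by
    rw [← Finsupp.degree_eq_sum, Finsupp.degree_eq_weight_one]
    exact hp (mem_support_iff.mp hm)
  simp only [coeff_aeval_C_mul_X_add_C_mul_X_monomial h01 u v j hdeg,
    prod_div_factorial_mul_eval_iterPDeriv_monomial]

theorem aeval_ite_mem_X_glAct {R : Type*} [CommSemiring R] {r : ℕ} (s : Finset (Fin r))
    (G : Matrix (Fin r) (Fin r) R) (p : MvPolynomial (Fin r) R) :
    aeval (fun b => if b ∈ s then X b else 0) (glAct G p) =
      aeval (fun a => ∑ b ∈ s, C (G b a) * X b) p := by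
  rw [glAct, ← AlgHom.comp_apply, comp_aeval]
  congr
  funext a
  simp [mul_ite, Finset.sum_ite_mem]

/-- For `r ≥ 2`, `p` homogeneous of degree `d`, `g ∈ GL_r(k)` and `0 ≤ j ≤ d`,
the coefficient of `x₁^{d-j} x₂^j` in `g·p` equals
`∑_{i₁+⋯+iᵣ=j} (∏ₐ g_{2a}^{iₐ}/iₐ!) · (∂^j p/∂x₁^{i₁}⋯∂xᵣ^{iᵣ})(g_{11},…,g_{1r})`. -/
theorem stmt0 {k : Type*} [Field k] [CharZero k] {r : ℕ} (hr : 2 ≤ r)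
    (d : ℕ) (p : MvPolynomial (Fin r) k) (hp : p.IsHomogeneous d)
    (g : GL (Fin r) k) (j : ℕ) :
    MvPolynomial.coeff
        (Finsupp.single (⟨0, by omega⟩ : Fin r) (d - j) +
          Finsupp.single (⟨1, by omega⟩ : Fin r) j)
        (glAct (g : Matrix (Fin r) (Fin r) k) p)
      = ∑ i ∈ Finset.Nat.antidiagonalTuple r j,
          (∏ a, (g : Matrix (Fin r) (Fin r) k) ⟨1, by omega⟩ a ^ i a / ((i a).factorial : k)) *
            MvPolynomial.eval (fun a => (g : Matrix (Fin r) (Fin r) k) ⟨0, by omega⟩ a)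
              (iterPDeriv i p) := by
  set i0 : Fin r := ⟨0, by omega⟩
  set i1 : Fin r := ⟨1, by omega⟩
  have h01 : i0 ≠ i1 := by simp [i0, i1, Fin.ext_iff]
  have hsupport : (Finsupp.single i0 (d - j) + Finsupp.single i1 j).support ⊆ {i0, i1} :=
    Finsupp.support_add.trans (Finset.union_subset
      (Finsupp.support_single_subset.trans (by simp))
      (Finsupp.support_single_subset.trans (by simp)))
  rw [← coeff_aeval_ite_mem_X _ hsupport, aeval_ite_mem_X_glAct]
  simp only [Finset.sum_pair h01]
  exact coeff_aeval_C_mul_X_add_C_mul_X_of_isHomogeneous h01 _ _ j hp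
end

section
/- Let v ∈ ⋀^b S_d be nonzero and suppose ω : ℝ^r → ℝ is a linear functional satisfying ω(ξ_{d,b}) < min_{χ ∈ Ξ_v} ω(χ) and ω(e_i) ≤ ω(e_{i+1}) for all 1 ≤ i ≤ r−1, where e_1,…,e_r is the standard basis of ℝ^r. Then for every invertible lower-triangular matrix l ∈ GL_r(k), one has ω(ξ_{d,b}) < min_{χ ∈ Ξ_{l·v}} ω(χ). -/
/-!
Weight monomials by `w i = ω(eᵢ)`, a nondecreasing function of `i`. A lower-triangular `l`
sends `xᵢ` to a combination of the `xⱼ` with `j ≥ i`, so every monomial occurring in `l · m`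
has weight at least that of `m`. The coordinate of `l · v` at a wedge `t` is
`∑ₛ v_s · det(minor)`; if it is nonzero, some `s` with `v_s ≠ 0` has a nonzero minor, and a
nonzero term of its Leibniz expansion matches the monomials of `s` with monomials of `t` of
no smaller weight. Hence `ω(wt t) ≥ ω(wt s) > ω(ξ_{d,b})`.
-/

open MvPolynomial

/-- Degree-`d` monomials in `x₁,…,x_r`, encoded as exponent vectors, carrying the
lexicographic order (`x₁ > x₂ > … > x_r`). -/
def MonIdx (r d : ℕ) : Type :=
  {f : Lex (Fin r →₀ ℕ) // ((ofLex f).sum fun _ e => e) = d}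

noncomputable instance (r d : ℕ) : Fintype (MonIdx r d) :=
  Fintype.ofInjective
    (fun m : MonIdx r d =>
      (⟨⇑(ofLex m.1), by
          have h := m.2
          rw [Finsupp.sum_fintype _ _ fun _ => rfl] at h
          rw [Finset.Nat.mem_antidiagonalTuple]
          exact h⟩ :
        {g : Fin r → ℕ // g ∈ Finset.Nat.antidiagonalTuple r d}))
    (fun a b h => by
      apply Subtype.ext
      have h' : ⇑(ofLex a.1) = ⇑(ofLex b.1) := congrArg Subtype.val h
      have h2 : ofLex a.1 = ofLex b.1 := DFunLike.coe_injective h'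
      exact h2)

noncomputable instance (r d : ℕ) : LinearOrder (MonIdx r d) :=
  inferInstanceAs
    (LinearOrder {f : Lex (Fin r →₀ ℕ) // ((ofLex f).sum fun _ e => e) = d})

/-- The index set `W_{d,b}` of the basis of wedges of monomials of `⋀^b S_d`:
`b`-element sets of degree-`d` monomials. -/
def WedgeIdx (r d b : ℕ) : Type := {s : Finset (MonIdx r d) // s.card = b}

noncomputable instance (r d b : ℕ) : Fintype (WedgeIdx r d b) := Subtype.fintype _

/-- The exponent `Finsupp` of a degree-`d` monomial. -/
def MonIdx.toFinsupp {r d : ℕ} (m : MonIdx r d) : Fin r →₀ ℕ :=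
  ofLex m.1

/-- The matrix coefficient of the induced action of `g` on `⋀^b S_d` in the basis of wedges
of monomials: the coordinate at `t` of `g` applied to the basis wedge `s` (both sorted
decreasingly for the lexicographic order), i.e. the `b × b` determinant of coefficients. -/
noncomputable def transMat {k : Type*} [CommRing k] {r d b : ℕ}
    (g : Matrix (Fin r) (Fin r) k) (s t : WedgeIdx r d b) : k :=
  Matrix.det (Matrix.of fun i j : Fin b =>
    MvPolynomial.coeff ((t.1.orderIsoOfFin t.2 i).1.toFinsupp)
      (glAct g (MvPolynomial.monomial ((s.1.orderIsoOfFin s.2 j).1.toFinsupp) 1)))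

/-- The induced action of a matrix `g` on `⋀^b S_d`, expressed on coordinates with respect
to the basis `W_{d,b}` of wedges of monomials. -/
noncomputable def wedgeAct {k : Type*} [CommRing k] {r d b : ℕ}
    (g : Matrix (Fin r) (Fin r) k) (v : WedgeIdx r d b → k) : WedgeIdx r d b → k :=
  fun t => ∑ s, v s * transMat g s t

/-- The weight of a basis element of `W_{d,b}`: the sum of the exponent vectors of its
monomials, an element of `ℤ^r`. -/
def wedgeWt {r d b : ℕ} (w : WedgeIdx r d b) : Fin r → ℤ :=
  fun i => ∑ m ∈ w.1, (ofLex m.1 i : ℤ)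

/-- The state `Ξ_v ⊂ ℤ^r` of `v ∈ ⋀^b S_d`: the set of weights of basis elements with
nonzero coordinate in `v`. -/
def stateSet {k : Type*} [CommRing k] {r d b : ℕ} (v : WedgeIdx r d b → k) :
    Set (Fin r → ℤ) :=
  {χ | ∃ w, v w ≠ 0 ∧ wedgeWt w = χ}

/-- `Δ_v`: the convex hull in `ℝ^r` of the state of `v`. -/
def hullOfState {k : Type*} [CommRing k] {r d b : ℕ} (v : WedgeIdx r d b → k) :
    Set (Fin r → ℝ) :=
  convexHull ℝ ((fun (χ : Fin r → ℤ) (i : Fin r) => (χ i : ℝ)) '' stateSet v)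

/-- `ξ_{d,b} = (db/r)·(1,…,1) ∈ ℝ^r`. -/
noncomputable def xiPoint (r d b : ℕ) : Fin r → ℝ := fun _ => (d * b : ℝ) / r

namespace MvPolynomial

variable {σ R M : Type*} [CommSemiring R] [AddCommMonoid M] [PartialOrder M]

def WeightAtLeast (w : σ → M) (c : M) (p : MvPolynomial σ R) : Prop :=
  ∀ μ ∈ p.support, c ≤ Finsupp.weight w μ

namespace WeightAtLeast

variable {w : σ → M} {a b c : M} {p q : MvPolynomial σ R}

theorem zero (c : M) : WeightAtLeast w c (0 : MvPolynomial σ R) := by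
  simp [WeightAtLeast]

theorem mono (hp : WeightAtLeast w c p) (h : a ≤ c) : WeightAtLeast w a p :=
  fun μ hμ => h.trans (hp μ hμ)

theorem monomial (μ : σ →₀ ℕ) (r : R) :
    WeightAtLeast w (Finsupp.weight w μ) (monomial μ r) := by
  intro ν hν
  rw [Finset.mem_singleton.1 (support_monomial_subset hν)]

theorem add (hp : WeightAtLeast w c p) (hq : WeightAtLeast w c q) :
    WeightAtLeast w c (p + q) := by
  classical
  intro μ hμ
  rcases Finset.mem_union.1 (support_add hμ) with h | h
  exacts [hp μ h, hq μ h]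

theorem sum {ι : Type*} {s : Finset ι} {f : ι → MvPolynomial σ R}
    (hf : ∀ i ∈ s, WeightAtLeast w c (f i)) : WeightAtLeast w c (∑ i ∈ s, f i) :=
  Finset.sum_induction f _ (fun _ _ => add) (zero c) hf

section OrderedAddMonoid

variable [IsOrderedAddMonoid M]

theorem mul (hp : WeightAtLeast w a p) (hq : WeightAtLeast w b q) :
    WeightAtLeast w (a + b) (p * q) := by
  classical
  intro μ hμ
  obtain ⟨μ₁, hμ₁, μ₂, hμ₂, rfl⟩ := Finset.mem_add.1 (support_mul p q hμ)
  rw [map_add]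
  exact add_le_add (hp μ₁ hμ₁) (hq μ₂ hμ₂)

theorem pow (hp : WeightAtLeast w a p) (n : ℕ) : WeightAtLeast w (n • a) (p ^ n) := by
  induction n with
  | zero => simpa using monomial (w := w) (0 : σ →₀ ℕ) (1 : R)
  | succ n ih => simpa [pow_succ, succ_nsmul] using ih.mul hp

theorem prod {ι : Type*} {s : Finset ι} {f : ι → MvPolynomial σ R} {a : ι → M}
    (hf : ∀ i ∈ s, WeightAtLeast w (a i) (f i)) :
    WeightAtLeast w (∑ i ∈ s, a i) (∏ i ∈ s, f i) := by
  classical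
  induction s using Finset.induction_on with
  | empty => simpa using monomial (w := w) (0 : σ →₀ ℕ) (1 : R)
  | insert i s hi ih =>
    rw [Finset.sum_insert hi, Finset.prod_insert hi]
    exact (hf i (Finset.mem_insert_self i s)).mul
      (ih fun j hj => hf j (Finset.mem_insert_of_mem hj))

theorem aeval_monomial {f : σ → MvPolynomial σ R} (hf : ∀ i, WeightAtLeast w (w i) (f i))
    (μ : σ →₀ ℕ) (r : R) :
    WeightAtLeast w (Finsupp.weight w μ) (aeval f (MvPolynomial.monomial μ r)) := by
  rw [MvPolynomial.aeval_monomial, algebraMap_eq, ← zero_add (Finsupp.weight w μ),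
    Finsupp.weight_apply]
  exact (monomial (w := w) 0 r).mul (prod fun i _ => (hf i).pow (μ i))

end OrderedAddMonoid

end WeightAtLeast

end MvPolynomial

theorem Matrix.exists_perm_forall_ne_zero_of_det_ne_zero {n R : Type*} [Fintype n]
    [DecidableEq n] [CommRing R] {A : Matrix n n R} (h : A.det ≠ 0) :
    ∃ σ : Equiv.Perm n, ∀ i, A (σ i) i ≠ 0 := by
  rw [Matrix.det_apply] at h
  obtain ⟨σ, -, hσ⟩ := Finset.exists_ne_zero_of_sum_ne_zero h
  refine ⟨σ, fun i hi => hσ ?_⟩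
  rw [Finset.prod_eq_zero (f := fun j => A (σ j) j) (Finset.mem_univ i) hi, smul_zero]

theorem LinearMap.weight_apply_single {ι : Type*} [Fintype ι] [DecidableEq ι]
    (ω : (ι → ℝ) →ₗ[ℝ] ℝ) (μ : ι →₀ ℕ) :
    Finsupp.weight (fun i => ω (Pi.single i 1)) μ = ω (fun i => (μ i : ℝ)) := by
  conv_rhs => rw [← Finset.univ_sum_single (fun i => (μ i : ℝ))]
  rw [Finsupp.weight_apply,
    Finsupp.sum_fintype μ (fun i c => c • ω (Pi.single i 1)) fun _ => zero_smul ℕ _, map_sum]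
  refine Finset.sum_congr rfl fun i _ => ?_
  rw [← map_nsmul]
  congr 1
  ext j
  simp [Pi.single_apply]

theorem Finset.sum_orderIsoOfFin {α β : Type*} [LinearOrder α] [AddCommMonoid β]
    (s : Finset α) {n : ℕ} (h : s.card = n) (f : α → β) :
    ∑ i, f (s.orderIsoOfFin h i) = ∑ m ∈ s, f m := by
  rw [← Finset.sum_coe_sort s]
  exact Equiv.sum_comp (s.orderIsoOfFin h).toEquiv fun m => f m

section LowerTriangular

variable {k M : Type*} [AddCommMonoid M] [PartialOrder M] [IsOrderedAddMonoid M]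
  {r : ℕ} {w : Fin r → M} {L : Matrix (Fin r) (Fin r) k}

theorem weightAtLeast_glAct_monomial [CommSemiring k] (hw : Monotone w)
    (hL : ∀ i j : Fin r, i < j → L i j = 0) (μ : Fin r →₀ ℕ) (a : k) :
    WeightAtLeast w (Finsupp.weight w μ) (glAct L (monomial μ a)) := by
  refine WeightAtLeast.aeval_monomial (fun i => WeightAtLeast.sum fun j _ => ?_) μ a
  rcases lt_or_ge j i with hji | hij
  · rw [hL j i hji, map_zero, zero_mul]
    exact WeightAtLeast.zero _
  · rw [C_mul_X_eq_monomial]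
    refine (WeightAtLeast.monomial (Finsupp.single j 1) (L j i)).mono ?_
    rw [Finsupp.weight_single, one_smul]
    exact hw hij

theorem sum_weight_le_of_transMat_ne_zero [CommRing k] (hw : Monotone w)
    (hL : ∀ i j : Fin r, i < j → L i j = 0) {d b : ℕ} {s t : WedgeIdx r d b}
    (h : transMat L s t ≠ 0) :
    ∑ m ∈ s.1, Finsupp.weight w m.toFinsupp ≤
      ∑ m ∈ t.1, Finsupp.weight w m.toFinsupp := by
  obtain ⟨π, hπ⟩ := Matrix.exists_perm_forall_ne_zero_of_det_ne_zero h
  rw [← Finset.sum_orderIsoOfFin s.1 s.2, ← Finset.sum_orderIsoOfFin t.1 t.2,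
    ← Equiv.sum_comp π fun i => Finsupp.weight w (t.1.orderIsoOfFin t.2 i).1.toFinsupp]
  exact Finset.sum_le_sum fun i _ =>
    weightAtLeast_glAct_monomial hw hL _ 1 _ (mem_support_iff.2 (hπ i))

end LowerTriangular

theorem Fin.monotone_of_le_succ {r : ℕ} {α : Type*} [Preorder α] {f : Fin r → α}
    (h : ∀ (i : Fin r) (h : (i : ℕ) + 1 < r), f i ≤ f ⟨(i : ℕ) + 1, h⟩) :
    Monotone f := by
  cases r with
  | zero => exact fun i => i.elim0
  | succ n => exact Fin.monotone_iff_le_succ.2 fun i => h i.castSucc (by simp)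

theorem apply_wedgeWt_eq_sum_weight {r d b : ℕ} (ω : (Fin r → ℝ) →ₗ[ℝ] ℝ)
    (s : WedgeIdx r d b) :
    ω (fun i => (wedgeWt s i : ℝ)) =
      ∑ m ∈ s.1, Finsupp.weight (fun i => ω (Pi.single i 1)) m.toFinsupp := by
  simp_rw [LinearMap.weight_apply_single, ← map_sum]
  congr 1
  ext i
  simp [wedgeWt, MonIdx.toFinsupp]

theorem stmt15_general {k : Type} [Field k] (r d b : ℕ)
    (v : WedgeIdx r d b → k) (ω : (Fin r → ℝ) →ₗ[ℝ] ℝ)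
    (hsep : ∀ χ ∈ stateSet v, ω (xiPoint r d b) < ω (fun i => (χ i : ℝ)))
    (hmono : ∀ (i : Fin r) (h : (i : ℕ) + 1 < r),
      ω (Pi.single i 1) ≤ ω (Pi.single ⟨(i : ℕ) + 1, h⟩ 1))
    (L : Matrix (Fin r) (Fin r) k) (hL : ∀ i j : Fin r, i < j → L i j = 0) :
    ∀ χ ∈ stateSet (wedgeAct L v), ω (xiPoint r d b) < ω (fun i => (χ i : ℝ)) := by
  rintro _ ⟨t, ht, rfl⟩
  obtain ⟨s, -, hst⟩ := Finset.exists_ne_zero_of_sum_ne_zero ht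
  have hw : Monotone fun i => ω (Pi.single i 1) := Fin.monotone_of_le_succ hmono
  calc ω (xiPoint r d b) < ω (fun i => (wedgeWt s i : ℝ)) :=
        hsep _ ⟨s, left_ne_zero_of_mul hst, rfl⟩
    _ = ∑ m ∈ s.1, Finsupp.weight (fun i => ω (Pi.single i 1)) m.toFinsupp :=
        apply_wedgeWt_eq_sum_weight ω s
    _ ≤ ∑ m ∈ t.1, Finsupp.weight (fun i => ω (Pi.single i 1)) m.toFinsupp :=
        sum_weight_le_of_transMat_ne_zero hw hL (right_ne_zero_of_mul hst)
    _ = ω (fun i => (wedgeWt t i : ℝ)) := (apply_wedgeWt_eq_sum_weight ω t).symm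

/-- **Lemma 5.3.** If `ω(ξ_{d,b}) < min ω(Ξ_v)` and `ω(e_i) ≤ ω(e_{i+1})`
for all `i`, then `ω(ξ_{d,b}) < min ω(Ξ_{l·v})` for every invertible lower-triangular `l`. -/
theorem stmt15 {k : Type} [Field k] [IsAlgClosed k] [CharZero k] (r d b : ℕ)
    (v : WedgeIdx r d b → k) (hv : v ≠ 0) (ω : (Fin r → ℝ) →ₗ[ℝ] ℝ)
    (hsep : ∀ χ ∈ stateSet v, ω (xiPoint r d b) < ω (fun i => (χ i : ℝ)))
    (hmono : ∀ (i : Fin r) (h : (i : ℕ) + 1 < r),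
      ω (Pi.single i 1) ≤ ω (Pi.single ⟨(i : ℕ) + 1, h⟩ 1))
    (L : Matrix (Fin r) (Fin r) k) (hL : ∀ i j : Fin r, i < j → L i j = 0)
    (hLinv : IsUnit L.det) :
    ∀ χ ∈ stateSet (wedgeAct L v), ω (xiPoint r d b) < ω (fun i => (χ i : ℝ)) :=
  stmt15_general r d b v ω hsep hmono L hL
end
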